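/- Let 𝒦 = ℂ((t)) be the field of formal Laurent series, 𝒪 = ℂ[[t]], and L₀ := 𝒪ⁿ ⊆ 𝒦ⁿ. Define the residue pairing ⟨v, w⟩ := (coefficient of t⁰ in Σ_{i=1}^{n} v_i w_i) for v, w ∈ 𝒦ⁿ (i.e. ⟨v,w⟩ = Res_{t=0} (ᵀv·w) dt/t). Let g ∈ GL_n(𝒦) have all entries in 𝒪, so that gL₀ ⊆ L₀ and tL₀ ⊆ t·ᵀg⁻¹L₀. Then: (1) ⟨gu, t·ᵀg⁻¹u′⟩ = 0 for all u, u′ ∈ L₀, and ⟨u, tu′⟩ = 0 for all u, u′ ∈ L₀; hence ⟨−,−⟩ descends to a ℂ-bilinear pairing (L₀ / gL₀) × ((t·ᵀg⁻¹L₀) / tL₀) → ℂ; (2) this induced pairing is perfect, i.e. it identifies the finite-dimensional ℂ-vector space (t·ᵀg⁻¹L₀)/tL₀ with the dual space (L₀ / gL₀)*. -/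

import Mathlib

noncomputable section

open Matrix

/-- The field `𝒦 = ℂ((t))` of formal Laurent series. -/
abbrev Kf : Type := LaurentSeries ℂ

/-- The uniformizer `t ∈ 𝒦`. -/
def tvar : Kf := HahnSeries.single (1 : ℤ) (1 : ℂ)

instance : IsScalarTower ℂ Kf Kf :=
  ⟨fun c x y => by
    show (c • x) * y = c • (x * y)
    rw [← HahnSeries.single_zero_mul_eq_smul, ← HahnSeries.single_zero_mul_eq_smul, mul_assoc]⟩

instance : SMulCommClass ℂ Kf Kf :=
  ⟨fun c x y => by
    show c • (x * y) = x * (c • y)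
    rw [← HahnSeries.single_zero_mul_eq_smul, ← HahnSeries.single_zero_mul_eq_smul,
      mul_left_comm]⟩

/-- The residue pairing `⟨v, w⟩ = Res_{t=0} (ᵀv·w) dt/t`, i.e. the coefficient of `t⁰`
in `Σ_i v_i w_i`. -/
def resPairing (n : ℕ) (v w : Fin n → Kf) : ℂ :=
  (∑ i, v i * w i).coeff 0

/-- The standard lattice `L₀ = 𝒪ⁿ ⊆ 𝒦ⁿ`, as a ℂ-subspace of `𝒦ⁿ`: the vectors all of
whose entries are (images of) formal power series. -/
def stdLatt (n : ℕ) : Submodule ℂ (Fin n → Kf) where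
  carrier := {v | ∀ i, ∃ p : PowerSeries ℂ, v i = ↑p}
  zero_mem' := fun i => ⟨0, by simp⟩
  add_mem' := by
    rintro v w hv hw i
    obtain ⟨p, hp⟩ := hv i
    obtain ⟨q, hq⟩ := hw i
    exact ⟨p + q, by simp [hp, hq]⟩
  smul_mem' := by
    intro c v hv i
    obtain ⟨p, hp⟩ := hv i
    refine ⟨c • p, ?_⟩
    rw [Pi.smul_apply, hp, PowerSeries.coe_smul]

/-- The sublattice `g·L₀` for a matrix `g` over `𝒦`. -/
def matLatt (n : ℕ) (A : Matrix (Fin n) (Fin n) Kf) : Submodule ℂ (Fin n → Kf) :=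
  Submodule.map ((Matrix.mulVecLin A).restrictScalars ℂ) (stdLatt n)

/-! The pairing `⟨v, t·ᵀB u⟩` equals the `t⁻¹`-coefficient of `(B v)·u`, so everything reduces
to the self-duality of `𝒪ⁿ` under `(x, u) ↦ Res_{t=0} (x·u) dt`: a vector `x ∈ 𝒦ⁿ` lies in `𝒪ⁿ`
iff this residue vanishes for every `u ∈ 𝒪ⁿ` (test against `u = t^k eᵢ`).  Taking `x = g⁻¹v`
describes the annihilator of `t·ᵀg⁻¹L₀` in `L₀`; taking `x = t⁻¹w` describes the annihilator
of `L₀`. -/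

theorem LaurentSeries.exists_powerSeries_eq_iff {R : Type*} [Semiring R] (f : LaurentSeries R) :
    (∃ p : PowerSeries R, f = p) ↔ ∀ m < 0, f.coeff m = 0 := by
  refine ⟨by rintro ⟨p, rfl⟩ m hm; rw [PowerSeries.coeff_coe, if_pos hm], fun h => ?_⟩
  refine ⟨PowerSeries.mk fun k => f.coeff k, HahnSeries.ext <| funext fun m => ?_⟩
  rw [PowerSeries.coeff_coe]
  split_ifs with hm
  · exact h m hm
  · rw [PowerSeries.coeff_mk, Int.natAbs_of_nonneg (not_lt.mp hm)]

theorem coeff_tvar_mul (f : Kf) (m : ℤ) : (tvar * f).coeff (m + 1) = f.coeff m := by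
  simpa [tvar] using HahnSeries.coeff_single_mul_add (r := (1 : ℂ)) (x := f) (a := m) (b := 1)

section Lattices

variable {n : ℕ}

theorem mem_stdLatt_iff {v : Fin n → Kf} : v ∈ stdLatt n ↔ ∀ i, ∀ m < 0, (v i).coeff m = 0 :=
  forall_congr' fun i => LaurentSeries.exists_powerSeries_eq_iff (v i)

theorem coeff_dotProduct_eq_zero_of_neg {v w : Fin n → Kf} (hv : v ∈ stdLatt n)
    (hw : w ∈ stdLatt n) {m : ℤ} (hm : m < 0) : (v ⬝ᵥ w).coeff m = 0 := by
  choose p hp using hv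
  choose q hq using hw
  obtain rfl : v = HahnSeries.ofPowerSeries ℤ ℂ ∘ p := funext hp
  obtain rfl : w = HahnSeries.ofPowerSeries ℤ ℂ ∘ q := funext hq
  rw [← RingHom.map_dotProduct]
  exact (LaurentSeries.exists_powerSeries_eq_iff _).mp ⟨_, rfl⟩ m hm

theorem mem_stdLatt_iff_forall_coeff_dotProduct_eq_zero {x : Fin n → Kf} :
    x ∈ stdLatt n ↔ ∀ u ∈ stdLatt n, (x ⬝ᵥ u).coeff (-1) = 0 := by
  refine ⟨fun hx u hu => coeff_dotProduct_eq_zero_of_neg hx hu (by norm_num), fun h => ?_⟩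
  refine mem_stdLatt_iff.mpr fun i m hm => ?_
  have hu : Pi.single i (HahnSeries.single (-1 - m) (1 : ℂ)) ∈ stdLatt n := by
    refine mem_stdLatt_iff.mpr fun j k hk => ?_
    rcases eq_or_ne j i with rfl | hji
    · rw [Pi.single_eq_same, HahnSeries.coeff_single_of_ne (by omega)]
    · rw [Pi.single_eq_of_ne hji, HahnSeries.coeff_zero]
  have hcoeff := HahnSeries.coeff_mul_single_add (r := (1 : ℂ)) (x := x i) (a := m) (b := -1 - m)
  rw [add_sub_cancel, mul_one] at hcoeff
  rw [← hcoeff, ← dotProduct_single]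
  exact h _ hu

theorem mem_matLatt_iff {A B : Matrix (Fin n) (Fin n) Kf} (hBA : B * A = 1) {v : Fin n → Kf} :
    v ∈ matLatt n A ↔ B *ᵥ v ∈ stdLatt n := by
  constructor
  · rintro ⟨u, hu, rfl⟩
    simpa [mulVec_mulVec, hBA] using hu
  · intro hv
    refine ⟨B *ᵥ v, hv, ?_⟩
    simp [mulVec_mulVec, mul_eq_one_comm.mp hBA]

theorem forall_mem_matLatt {A : Matrix (Fin n) (Fin n) Kf} {P : (Fin n → Kf) → Prop} :
    (∀ w ∈ matLatt n A, P w) ↔ ∀ u ∈ stdLatt n, P (A *ᵥ u) := by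
  simp [matLatt]

theorem resPairing_eq_coeff_dotProduct (v w : Fin n → Kf) :
    resPairing n v w = (v ⬝ᵥ w).coeff 0 := rfl

theorem resPairing_comm (v w : Fin n → Kf) : resPairing n v w = resPairing n w v := by
  rw [resPairing_eq_coeff_dotProduct, resPairing_eq_coeff_dotProduct, dotProduct_comm]

theorem resPairing_tvar_smul_transpose_mulVec (B : Matrix (Fin n) (Fin n) Kf) (v u : Fin n → Kf) :
    resPairing n v ((tvar • Bᵀ) *ᵥ u) = ((B *ᵥ v) ⬝ᵥ u).coeff (-1) := by
  rw [resPairing_eq_coeff_dotProduct, smul_mulVec, dotProduct_smul, dotProduct_mulVec,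
    vecMul_transpose, smul_eq_mul, ← neg_add_cancel (1 : ℤ), coeff_tvar_mul]

theorem forall_resPairing_eq_zero_iff_mem_matLatt {A B : Matrix (Fin n) (Fin n) Kf}
    (hBA : B * A = 1) (v : Fin n → Kf) :
    (∀ u ∈ stdLatt n, resPairing n v ((tvar • Bᵀ) *ᵥ u) = 0) ↔ v ∈ matLatt n A := by
  simp only [resPairing_tvar_smul_transpose_mulVec]
  rw [mem_matLatt_iff hBA, mem_stdLatt_iff_forall_coeff_dotProduct_eq_zero]

theorem forall_resPairing_eq_zero_iff_mem_matLatt_tvar (w : Fin n → Kf) :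
    (∀ v ∈ stdLatt n, resPairing n v w = 0) ↔ w ∈ matLatt n (tvar • 1) := by
  have htvar : tvar ≠ 0 := HahnSeries.single_ne_zero one_ne_zero
  have hBA : (tvar⁻¹ • 1 : Matrix (Fin n) (Fin n) Kf) * (tvar • 1) = 1 := by
    rw [smul_one_eq_diagonal, smul_one_eq_diagonal, diagonal_mul_diagonal,
      inv_mul_cancel₀ htvar, diagonal_one]
  have hdual : tvar • (tvar⁻¹ • 1 : Matrix (Fin n) (Fin n) Kf)ᵀ = 1 := by
    rw [transpose_smul, transpose_one, smul_smul, mul_inv_cancel₀ htvar, one_smul]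
  rw [← forall_resPairing_eq_zero_iff_mem_matLatt hBA, hdual]
  simp only [one_mulVec, resPairing_comm w]

end Lattices

theorem residue_pairing_perfect_general (n : ℕ) (g : GL (Fin n) Kf) :
    (∀ u ∈ stdLatt n, ∀ u' ∈ stdLatt n,
      resPairing n ((g : Matrix (Fin n) (Fin n) Kf).mulVec u)
        ((tvar • ((g⁻¹ : GL (Fin n) Kf) : Matrix (Fin n) (Fin n) Kf)ᵀ).mulVec u') = 0) ∧
    (∀ u ∈ stdLatt n, ∀ u' ∈ stdLatt n, resPairing n u (tvar • u') = 0) ∧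
    (∀ v ∈ stdLatt n,
      ((∀ w ∈ matLatt n (tvar • ((g⁻¹ : GL (Fin n) Kf) : Matrix (Fin n) (Fin n) Kf)ᵀ),
          resPairing n v w = 0) ↔
        v ∈ matLatt n (g : Matrix (Fin n) (Fin n) Kf))) ∧
    (∀ w ∈ matLatt n (tvar • ((g⁻¹ : GL (Fin n) Kf) : Matrix (Fin n) (Fin n) Kf)ᵀ),
      ((∀ v ∈ stdLatt n, resPairing n v w = 0) ↔
        w ∈ matLatt n (tvar • (1 : Matrix (Fin n) (Fin n) Kf)))) := by
  have orth_g := forall_resPairing_eq_zero_iff_mem_matLatt g.inv_mul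
  refine ⟨fun u hu => (orth_g _).mpr ⟨u, hu, rfl⟩, fun u hu u' hu' => ?_,
    fun v _ => forall_mem_matLatt.trans (orth_g v),
    fun w _ => forall_resPairing_eq_zero_iff_mem_matLatt_tvar w⟩
  exact (forall_resPairing_eq_zero_iff_mem_matLatt_tvar _).mpr ⟨u', hu', by simp⟩ u hu

/-- Let `g ∈ GL_n(𝒦)` have all entries in `𝒪 = ℂ[[t]]`.  Then:
(1) `⟨gu, t·ᵀg⁻¹u′⟩ = 0` and `⟨u, tu′⟩ = 0` for all `u, u′ ∈ L₀`, so the residue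
pairing descends to a pairing `(L₀/gL₀) × ((t·ᵀg⁻¹L₀)/tL₀) → ℂ`;
(2) the induced pairing is perfect: an element of `L₀` is orthogonal to all of
`t·ᵀg⁻¹L₀` iff it lies in `gL₀`, and an element of `t·ᵀg⁻¹L₀` is orthogonal to all of
`L₀` iff it lies in `tL₀`; hence `(t·ᵀg⁻¹L₀)/tL₀` is identified with `(L₀/gL₀)*`. -/
theorem residue_pairing_perfect (n : ℕ) (g : GL (Fin n) Kf)
    (hg : ∀ i j, ∃ p : PowerSeries ℂ, (g : Matrix (Fin n) (Fin n) Kf) i j = ↑p) :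
    (∀ u ∈ stdLatt n, ∀ u' ∈ stdLatt n,
      resPairing n ((g : Matrix (Fin n) (Fin n) Kf).mulVec u)
        ((tvar • ((g⁻¹ : GL (Fin n) Kf) : Matrix (Fin n) (Fin n) Kf)ᵀ).mulVec u') = 0) ∧
    (∀ u ∈ stdLatt n, ∀ u' ∈ stdLatt n, resPairing n u (tvar • u') = 0) ∧
    (∀ v ∈ stdLatt n,
      ((∀ w ∈ matLatt n (tvar • ((g⁻¹ : GL (Fin n) Kf) : Matrix (Fin n) (Fin n) Kf)ᵀ),
          resPairing n v w = 0) ↔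
        v ∈ matLatt n (g : Matrix (Fin n) (Fin n) Kf))) ∧
    (∀ w ∈ matLatt n (tvar • ((g⁻¹ : GL (Fin n) Kf) : Matrix (Fin n) (Fin n) Kf)ᵀ),
      ((∀ v ∈ stdLatt n, resPairing n v w = 0) ↔
        w ∈ matLatt n (tvar • (1 : Matrix (Fin n) (Fin n) Kf)))) :=
  residue_pairing_perfect_general n g
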